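/- arXiv:2309.15196 — 2 statements merged into one kernel-verified Lean document; each statement's English description precedes it below -/
import Mathlib

section
/- If T₁ and T₂ are trees and f : V(T₁) → V(T₂) is any function, then the Sierpiński product T₁ ⊗_f T₂ is a tree. -/
open SimpleGraph

/-- The Sierpiński product of graphs `G` and `H` with respect to `f`. -/
def sierpinskiProd {α β : Type*} (G : SimpleGraph α) (H : SimpleGraph β) (f : α → β) :
    SimpleGraph (α × β) where
  Adj p q := (p.1 = q.1 ∧ H.Adj p.2 q.2) ∨ (G.Adj p.1 q.1 ∧ p.2 = f q.1 ∧ q.2 = f p.1)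
  symm := by
    constructor
    rintro p q (⟨h1, h2⟩ | ⟨h1, h2, h3⟩)
    · exact Or.inl ⟨h1.symm, h2.symm⟩
    · exact Or.inr ⟨h1.symm, h3, h2⟩
  loopless := by
    constructor
    rintro p (⟨-, h⟩ | ⟨h, -⟩)
    · exact H.ne_of_adj h rfl
    · exact G.ne_of_adj h rfl

/-- A set `S` of vertices resolves the graph `G`. -/
def IsResolvingSet {V : Type*} (G : SimpleGraph V) (S : Set V) : Prop :=
  ∀ u v : V, (∀ s ∈ S, G.dist u s = G.dist v s) → u = v

/-- The metric dimension of a graph. -/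
noncomputable def metricDim {V : Type*} (G : SimpleGraph V) : ℕ :=
  sInf {n | ∃ S : Set V, S.ncard = n ∧ IsResolvingSet G S}

/-- A graph is a path if it is isomorphic to some path graph. -/
def IsPathGraph {V : Type*} (G : SimpleGraph V) : Prop :=
  ∃ n, Nonempty (G ≃g pathGraph n)


section SierpinskiAux

open Classical in
private lemma getVert_one_append {V : Type*} {G : SimpleGraph V} {u v w : V}
    (q : G.Walk u v) (r : G.Walk v w) (hq : q.length ≠ 0) :
    (q.append r).getVert 1 = q.getVert 1 := by
  rw [SimpleGraph.Walk.getVert_append]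
  rcases Nat.lt_or_ge 1 q.length with h | h
  · rw [if_pos h]
  · have h1 : q.length = 1 := le_antisymm h (Nat.one_le_iff_ne_zero.2 hq)
    rw [if_neg (by omega)]
    have hv := q.getVert_length
    rw [h1] at hv
    rw [h1, hv]
    exact r.getVert_zero

private lemma isPath_concat' {V : Type*} {G : SimpleGraph V} {u v w : V} {p : G.Walk u v}
    (hp : p.IsPath) (h : G.Adj v w) (hw : w ∉ p.support) : (p.concat h).IsPath := by
  rw [← SimpleGraph.Walk.isPath_reverse_iff, SimpleGraph.Walk.reverse_concat,
    SimpleGraph.Walk.cons_isPath_iff]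
  exact ⟨hp.reverse, by simpa using hw⟩

variable {α β : Type*} {T₁ : SimpleGraph α} {T₂ : SimpleGraph β} {f : α → β}

private lemma sp_adj {p q : α × β} :
    (sierpinskiProd T₁ T₂ f).Adj p q ↔
      (p.1 = q.1 ∧ T₂.Adj p.2 q.2) ∨ (T₁.Adj p.1 q.1 ∧ p.2 = f q.1 ∧ q.2 = f p.1) := Iff.rfl

private lemma sp_adj_fiber {a : α} {k k' : β} (h : T₂.Adj k k') :
    (sierpinskiProd T₁ T₂ f).Adj (a, k) (a, k') := Or.inl ⟨rfl, h⟩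

private lemma sp_adj_conn {a a' : α} (h : T₁.Adj a a') :
    (sierpinskiProd T₁ T₂ f).Adj (a, f a') (a', f a) := Or.inr ⟨h, rfl, rfl⟩

private lemma sp_reach_fiber (h2c : T₂.Connected) (a : α) (x y : β) :
    (sierpinskiProd T₁ T₂ f).Reachable (a, x) (a, y) :=
  SimpleGraph.Reachable.map ⟨fun b => (a, b), fun h => sp_adj_fiber h⟩ (h2c x y)

private lemma sp_connected (h1c : T₁.Connected) (h2c : T₂.Connected) :
    (sierpinskiProd T₁ T₂ f).Connected := by
  have key : ∀ {a a' : α} (_ : T₁.Walk a a') (k k' : β),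
      (sierpinskiProd T₁ T₂ f).Reachable (a, k) (a', k') := by
    intro a a' w
    induction w with
    | nil => exact fun k k' => sp_reach_fiber h2c _ k k'
    | @cons a b a' h w ih =>
      intro k k'
      exact ((sp_reach_fiber h2c _ k (f b)).trans
        (SimpleGraph.Adj.reachable (sp_adj_conn h))).trans (ih (f a) k')
  have hα : Nonempty α := h1c.nonempty
  have hβ : Nonempty β := h2c.nonempty
  refine SimpleGraph.Connected.mk ?_
  rintro ⟨a, k⟩ ⟨a', k'⟩
  exact (h1c a a').elim fun w => key w k k'

/-- The second vertex on the canonical path from `g` to `a` in a tree. -/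
private noncomputable def nxt (h1 : T₁.IsTree) (g a : α) : α :=
  (Classical.choose (h1.existsUnique_path g a)).getVert 1

private lemma nxt_eq (h1 : T₁.IsTree) {g a : α} {p : T₁.Walk g a} (hp : p.IsPath) :
    nxt h1 g a = p.getVert 1 := by
  have hu := (Classical.choose_spec (h1.existsUnique_path g a)).2 p hp
  rw [nxt, ← hu]

private lemma nxt_adj (h1 : T₁.IsTree) {g a : α} (h : T₁.Adj g a) : nxt h1 g a = a := by
  have hp : (SimpleGraph.Walk.cons h SimpleGraph.Walk.nil).IsPath := by
    simp [SimpleGraph.Walk.cons_isPath_iff, h.ne]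
  rw [nxt_eq h1 hp]
  rfl

private lemma nxt_step (h1 : T₁.IsTree) {g a a' : α} (ha : a ≠ g) (ha' : a' ≠ g)
    (h : T₁.Adj a a') : nxt h1 g a = nxt h1 g a' := by
  classical
  obtain ⟨hp, -⟩ := Classical.choose_spec (h1.existsUnique_path g a)
  set p := Classical.choose (h1.existsUnique_path g a) with hpdef
  have hQ : nxt h1 g a = p.getVert 1 := rfl
  have hplen : p.length ≠ 0 := fun h0 => ha (SimpleGraph.Walk.eq_of_length_eq_zero h0).symm
  by_cases hmem : a' ∈ p.support
  · have hlen : (p.takeUntil a' hmem).length ≠ 0 := fun h0 =>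
      ha' (SimpleGraph.Walk.eq_of_length_eq_zero h0).symm
    have hsplit : p.getVert 1 =
        ((p.takeUntil a' hmem).append (p.dropUntil a' hmem)).getVert 1 := by
      rw [p.take_spec hmem]
    rw [hQ, nxt_eq h1 (hp.takeUntil hmem), hsplit, getVert_one_append _ _ hlen]
  · rw [hQ, nxt_eq h1 (isPath_concat' hp h hmem), SimpleGraph.Walk.concat_eq_append,
      getVert_one_append _ _ hplen]

open Classical in
private lemma sp_fiber_bridge (h1 : T₁.IsTree) (h2 : T₂.IsAcyclic) {g : α} {h h' : β}
    (hhh : T₂.Adj h h') :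
    ¬ ((sierpinskiProd T₁ T₂ f) \
        SimpleGraph.fromEdgeSet {s(((g, h) : α × β), (g, h'))}).Reachable (g, h) (g, h') := by
  set T₂' := T₂ \ SimpleGraph.fromEdgeSet {s(h, h')} with hT
  have hbr : ¬ T₂'.Reachable h h' :=
    ((SimpleGraph.isAcyclic_iff_forall_adj_isBridge.1 h2) hhh)
  set φ : α × β → β := fun p => if p.1 = g then p.2 else f (nxt h1 g p.1) with hφ
  have φg : ∀ k : β, φ (g, k) = k := fun k => if_pos rfl
  have φng : ∀ (a : α) (k : β), a ≠ g → φ (a, k) = f (nxt h1 g a) := fun a k hag => if_neg hag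
  set G' := (sierpinskiProd T₁ T₂ f) \
      SimpleGraph.fromEdgeSet {s(((g, h) : α × β), (g, h'))} with hG'
  have step : ∀ {p q : α × β}, G'.Adj p q → T₂'.Reachable (φ p) (φ q) := by
    rintro ⟨a, k⟩ ⟨a', k'⟩ hpq
    rw [hG', SimpleGraph.sdiff_adj, SimpleGraph.fromEdgeSet_adj] at hpq
    obtain ⟨hadj, hne⟩ := hpq
    have hEne : s(((a, k) : α × β), (a', k')) ≠ s(((g, h) : α × β), (g, h')) := by
      intro hE
      exact hne ⟨Set.mem_singleton_iff.2 hE, hadj.ne⟩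
    rcases sp_adj.1 hadj with ⟨heq, hk⟩ | ⟨ha, hk, hk'⟩
    · dsimp only at heq hk
      subst heq
      by_cases hag : a = g
      · subst hag
        rw [φg, φg]
        refine SimpleGraph.Adj.reachable ?_
        rw [hT, SimpleGraph.sdiff_adj, SimpleGraph.fromEdgeSet_adj]
        refine ⟨hk, ?_⟩
        rintro ⟨hmem, -⟩
        rw [Set.mem_singleton_iff, Sym2.eq_iff] at hmem
        apply hEne
        rcases hmem with ⟨rfl, rfl⟩ | ⟨rfl, rfl⟩
        · rfl
        · exact Sym2.eq_swap
      · rw [φng a k hag, φng a k' hag]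
    · dsimp only at ha hk hk'
      subst hk; subst hk'
      by_cases hag : a = g
      · subst hag
        rw [φg, φng _ _ ha.ne', nxt_adj h1 ha]
      · by_cases ha'g : a' = g
        · subst ha'g
          rw [φng _ _ hag, φg, nxt_adj h1 ha.symm]
        · rw [φng _ _ hag, φng _ _ ha'g, nxt_step h1 hag ha'g ha]
  have main : ∀ {p q : α × β} (_ : G'.Walk p q), T₂'.Reachable (φ p) (φ q) := by
    intro p q w
    induction w with
    | nil => exact SimpleGraph.Reachable.refl _
    | cons hadj w ih => exact (step hadj).trans ih
  rintro ⟨w⟩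
  have hmm := main w
  rw [φg, φg] at hmm
  exact hbr hmm

private lemma sp_conn_bridge (h1 : T₁.IsAcyclic) {g g' : α} (hgg : T₁.Adj g g') :
    ¬ ((sierpinskiProd T₁ T₂ f) \
        SimpleGraph.fromEdgeSet {s(((g, f g') : α × β), (g', f g))}).Reachable
      (g, f g') (g', f g) := by
  set T₁' := T₁ \ SimpleGraph.fromEdgeSet {s(g, g')} with hT
  have hbr : ¬ T₁'.Reachable g g' :=
    ((SimpleGraph.isAcyclic_iff_forall_adj_isBridge.1 h1) hgg)
  set G' := (sierpinskiProd T₁ T₂ f) \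
      SimpleGraph.fromEdgeSet {s(((g, f g') : α × β), (g', f g))} with hG'
  have step : ∀ {p q : α × β}, G'.Adj p q → T₁'.Reachable p.1 q.1 := by
    rintro ⟨a, k⟩ ⟨a', k'⟩ hpq
    rw [hG', SimpleGraph.sdiff_adj, SimpleGraph.fromEdgeSet_adj] at hpq
    obtain ⟨hadj, hne⟩ := hpq
    have hEne : s(((a, k) : α × β), (a', k')) ≠ s(((g, f g') : α × β), (g', f g)) := by
      intro hE
      exact hne ⟨Set.mem_singleton_iff.2 hE, hadj.ne⟩
    rcases sp_adj.1 hadj with ⟨heq, -⟩ | ⟨ha, hk, hk'⟩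
    · dsimp only at heq
      dsimp only
      rw [heq]
    · dsimp only at ha hk hk'
      subst hk; subst hk'
      refine SimpleGraph.Adj.reachable ?_
      rw [hT, SimpleGraph.sdiff_adj, SimpleGraph.fromEdgeSet_adj]
      refine ⟨ha, ?_⟩
      rintro ⟨hmem, -⟩
      rw [Set.mem_singleton_iff, Sym2.eq_iff] at hmem
      apply hEne
      rcases hmem with ⟨rfl, rfl⟩ | ⟨rfl, rfl⟩
      · rfl
      · exact Sym2.eq_swap
  have main : ∀ {p q : α × β} (_ : G'.Walk p q), T₁'.Reachable p.1 q.1 := by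
    intro p q w
    induction w with
    | nil => exact SimpleGraph.Reachable.refl _
    | cons hadj w ih => exact (step hadj).trans ih
  rintro ⟨w⟩
  exact hbr (main w)

end SierpinskiAux

theorem sierpinskiProd_isTree {α β : Type*} (T₁ : SimpleGraph α) (T₂ : SimpleGraph β)
    (f : α → β) (h1 : T₁.IsTree) (h2 : T₂.IsTree) :
    (sierpinskiProd T₁ T₂ f).IsTree := by
  constructor
  · exact sp_connected h1.1 h2.1
  · rw [SimpleGraph.isAcyclic_iff_forall_adj_isBridge]
    rintro ⟨a, k⟩ ⟨a', k'⟩ hadj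
    rw [SimpleGraph.isBridge_iff]
    rcases sp_adj.1 hadj with ⟨heq, hk⟩ | ⟨ha, hk, hk'⟩
    · dsimp only at heq hk
      subst heq
      exact sp_fiber_bridge h1 h2.2 hk
    · dsimp only at ha hk hk'
      subst hk; subst hk'
      exact sp_conn_bridge h1.2 ha
end

section
/- For n ≥ 3, if f₁ : V(C_n) → V(C_3) is a constant function, then dim(C_n ⊗_{f₁} C_3) ≥ n. -/
open SimpleGraph

/-- Twin lemma: if `a` and `b` are adjacent and every neighbor of `a` other than `b`
is a neighbor of `b`, then the distance from `b` to `s` is at most that from `a`,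
provided `s ∉ {a, b}`. -/
lemma twin_dist_le {V : Type*} {G : SimpleGraph V} {a b s : V}
    (hab : G.Adj a b) (hN : ∀ w, G.Adj a w → w ≠ b → G.Adj b w)
    (hsa : s ≠ a) : G.dist b s ≤ G.dist a s := by
  by_cases h0 : G.dist a s = 0
  · rw [SimpleGraph.dist_eq_zero_iff_eq_or_not_reachable] at h0
    rcases h0 with h | h
    · exact absurd h.symm hsa
    · have : ¬ G.Reachable b s := fun hr => h (hab.reachable.trans hr)
      simp [SimpleGraph.dist_eq_zero_of_not_reachable this]
  · obtain ⟨p, hp⟩ := SimpleGraph.exists_walk_of_dist_ne_zero h0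
    cases p with
    | nil => simp at hp; exact absurd rfl hsa
    | @cons _ w _ h q =>
      by_cases hwb : w = b
      · subst hwb
        have := SimpleGraph.dist_le q
        simp [SimpleGraph.Walk.length_cons] at hp
        omega
      · have hle : G.dist b s ≤ q.length + 1 :=
          SimpleGraph.dist_le (SimpleGraph.Walk.cons (hN w h hwb) q)
        rw [SimpleGraph.Walk.length_cons] at hp
        omega

lemma twin_dist_eq {V : Type*} {G : SimpleGraph V} {a b s : V}
    (hab : G.Adj a b) (hN : ∀ w, G.Adj a w → w ≠ b → G.Adj b w)
    (hN' : ∀ w, G.Adj b w → w ≠ a → G.Adj a w)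
    (hsa : s ≠ a) (hsb : s ≠ b) : G.dist a s = G.dist b s :=
  le_antisymm (twin_dist_le hab.symm hN' hsb) (twin_dist_le hab hN hsa)

theorem sierpinskiProd_cycle_triangle_const_dim_ge (n : ℕ) (hn : 3 ≤ n) (c : Fin 3) :
    n ≤ metricDim (sierpinskiProd (cycleGraph n) (cycleGraph 3) (fun _ => c)) := by
  classical
  set P := sierpinskiProd (cycleGraph n) (cycleGraph 3) (fun _ => c) with hP
  have hC3 : ∀ x y : Fin 3, (cycleGraph 3).Adj x y ↔ x ≠ y := by decide
  have hcgen : ∀ d : Fin 3, d + 1 ≠ d ∧ d + 2 ≠ d ∧ d + 1 ≠ d + 2 := by decide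
  obtain ⟨hc1, hc2, hc12⟩ := hcgen c
  -- the graph is preconnected
  have hpre : P.Preconnected := by
    have hbase : ∀ g h, P.Reachable (g, h) (g, c) := by
      intro g h
      by_cases hh : h = c
      · subst hh; rfl
      · exact (SimpleGraph.Adj.reachable (Or.inl ⟨rfl, (hC3 h c).mpr hh⟩))
    intro ⟨g, h⟩ ⟨g', h'⟩
    have hmid : P.Reachable (g, c) (g', c) :=
      (cycleGraph_preconnected g g').map
        (⟨fun g => (g, c), fun {a b} hab => Or.inr ⟨hab, rfl, rfl⟩⟩ : cycleGraph n →g P)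
    exact ((hbase g h).trans hmid).trans (hbase g' h').symm
  -- the universe is a resolving set
  have huniv : IsResolvingSet P Set.univ := by
    intro u v h
    have := h u (Set.mem_univ u)
    rw [SimpleGraph.dist_self] at this
    have hr := hpre v u
    exact ((hr.dist_eq_zero_iff).mp this.symm).symm
  refine le_csInf ⟨(Set.univ : Set (Fin n × Fin 3)).ncard, Set.univ, rfl, huniv⟩ ?_
  rintro m ⟨S, rfl, hS⟩
  -- each copy contains one of the twins
  have hkey : ∀ g : Fin n, (g, c + 1) ∈ S ∨ (g, c + 2) ∈ S := by
    intro g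
    by_contra hcon
    push_neg at hcon
    obtain ⟨h1, h2⟩ := hcon
    have hab : P.Adj (g, c + 1) (g, c + 2) := Or.inl ⟨rfl, (hC3 _ _).mpr hc12⟩
    have hN : ∀ w, P.Adj (g, c + 1) w → w ≠ (g, c + 2) → P.Adj (g, c + 2) w := by
      rintro ⟨g', h'⟩ (⟨hg, hadj⟩ | ⟨_, habs, _⟩) hw
      · exact Or.inl ⟨hg, (hC3 _ _).mpr fun he => hw (Prod.ext hg.symm he.symm)⟩
      · exact absurd habs hc1
    have hN' : ∀ w, P.Adj (g, c + 2) w → w ≠ (g, c + 1) → P.Adj (g, c + 1) w := by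
      rintro ⟨g', h'⟩ (⟨hg, hadj⟩ | ⟨_, habs, _⟩) hw
      · exact Or.inl ⟨hg, (hC3 _ _).mpr fun he => hw (Prod.ext hg.symm he.symm)⟩
      · exact absurd habs hc2
    have heq : (g, c + 1) = ((g, c + 2) : Fin n × Fin 3) := by
      apply hS
      intro s hs
      exact twin_dist_eq hab hN hN' (fun he => h1 (he ▸ hs)) (fun he => h2 (he ▸ hs))
    exact hc12 (congrArg Prod.snd heq)
  -- build an injection from Fin n into S
  let F : Fin n → Fin n × Fin 3 := fun g => if (g, c + 1) ∈ S then (g, c + 1) else (g, c + 2)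
  have hFmem : ∀ g, F g ∈ S := by
    intro g
    by_cases h : (g, c + 1) ∈ S
    · simp [F, h]
    · have := (hkey g).resolve_left h
      simpa [F, h] using this
  have hFinj : Function.Injective F := by
    intro a b hFab
    have : (F a).1 = (F b).1 := congrArg Prod.fst hFab
    simpa [F, apply_ite Prod.fst] using this
  have hsub : F '' Set.univ ⊆ S := by
    rintro _ ⟨g, -, rfl⟩; exact hFmem g
  calc n = (F '' Set.univ).ncard := by
            rw [Set.ncard_image_of_injective _ hFinj, Set.ncard_univ, Nat.card_eq_fintype_card,
              Fintype.card_fin]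
       _ ≤ S.ncard := Set.ncard_le_ncard hsub (Set.toFinite S)
end
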